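/- arXiv:1009.1668 — 3 statements merged into one kernel-verified Lean document; each statement's English description precedes it below -/
import Mathlib

section
/- Let n ≥ 1, let δ₁, δ₂, δ₃, ε be real numbers in [−1,1], and let f, g : {0,1}ⁿ → {−1, 1} with Fourier coefficients f̂_z = 2^{−n} ∑_{s ∈ {0,1}ⁿ} (−1)^{z·s} f(s) and ĝ_z = 2^{−n} ∑_{t ∈ {0,1}ⁿ} (−1)^{z·t} g(t). Then | ∑_{z ∈ {0,1}ⁿ} f̂_z ĝ_z ( δ₁^{|z|} + δ₂^{|z|} + δ₃^{|z|} − ε^{|z|} ) | ≤ max_{0 ≤ k ≤ n} | δ₁^k + δ₂^k + δ₃^k − ε^k |, where |z| denotes the Hamming weight of z. -/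
/-- The Hamming weight of a bit string `z : Fin n → Bool`. -/
def hammWt {n : ℕ} (z : Fin n → Bool) : ℕ :=
  (Finset.univ.filter fun i => z i = true).card

/-- The character `χ_z(s) = (-1)^{z · s}` of the group `ℤ₂ⁿ`, as a real number. -/
def chi {n : ℕ} (z s : Fin n → Bool) : ℝ :=
  (-1 : ℝ) ^ (Finset.univ.filter fun i => z i = true ∧ s i = true).card

/-- The Fourier coefficient `f̂_z = 2^{-n} ∑_s (-1)^{z·s} f(s)`. -/
noncomputable def fhat {n : ℕ} (f : (Fin n → Bool) → ℝ) (z : Fin n → Bool) : ℝ :=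
  (1 / 2 : ℝ) ^ n * ∑ s : Fin n → Bool, chi z s * f s

lemma chi_eq_prod {n : ℕ} (z s : Fin n → Bool) :
    chi z s = ∏ i : Fin n, (if z i = true ∧ s i = true then (-1 : ℝ) else 1) := by
  rw [chi, Finset.prod_ite, Finset.prod_const, Finset.prod_const, one_pow, mul_one]

lemma sum_chi_mul_chi {n : ℕ} (s t : Fin n → Bool) :
    ∑ z : Fin n → Bool, chi z s * chi z t = if s = t then (2 : ℝ) ^ n else 0 := by
  have h1 : ∀ z : Fin n → Bool, chi z s * chi z t =
      ∏ i : Fin n, ((if z i = true ∧ s i = true then (-1 : ℝ) else 1) *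
        (if z i = true ∧ t i = true then (-1 : ℝ) else 1)) := by
    intro z
    rw [chi_eq_prod, chi_eq_prod, ← Finset.prod_mul_distrib]
  simp only [h1]
  have h2 : ∑ z : Fin n → Bool, ∏ i : Fin n,
      ((if z i = true ∧ s i = true then (-1 : ℝ) else 1) *
        (if z i = true ∧ t i = true then (-1 : ℝ) else 1)) =
      ∏ i : Fin n, ∑ b : Bool, ((if b = true ∧ s i = true then (-1 : ℝ) else 1) *
        (if b = true ∧ t i = true then (-1 : ℝ) else 1)) := by
    rw [Finset.prod_univ_sum, ← Fintype.piFinset_univ]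
  rw [h2]
  by_cases h : s = t
  · subst h
    rw [if_pos rfl]
    have hfac : ∀ i : Fin n, (∑ b : Bool, ((if b = true ∧ s i = true then (-1 : ℝ) else 1) *
        (if b = true ∧ s i = true then (-1 : ℝ) else 1))) = 2 := by
      intro i
      cases hsi : s i <;> simp [Fintype.sum_bool, hsi] <;> norm_num
    simp only [hfac, Finset.prod_const, Finset.card_univ, Fintype.card_fin]
  · rw [if_neg h]
    obtain ⟨i, hi⟩ : ∃ i, s i ≠ t i := by
      by_contra hc
      push_neg at hc
      exact h (funext hc)
    apply Finset.prod_eq_zero (Finset.mem_univ i)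
    cases hsi : s i <;> cases hti : t i <;>
      simp [Fintype.sum_bool, hsi, hti] at hi ⊢
    all_goals norm_num

lemma parseval {n : ℕ} (f g : (Fin n → Bool) → ℝ) :
    ∑ z : Fin n → Bool, fhat f z * fhat g z
      = (1 / 2 : ℝ) ^ n * ∑ s : Fin n → Bool, f s * g s := by
  have key : ∀ z : Fin n → Bool, fhat f z * fhat g z =
      (1 / 2 : ℝ) ^ n * (1 / 2 : ℝ) ^ n *
        ∑ s : Fin n → Bool, ∑ t : Fin n → Bool, (f s * g t) * (chi z s * chi z t) := by
    intro z
    rw [fhat, fhat, mul_mul_mul_comm, Finset.sum_mul_sum]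
    congr 1
    refine Finset.sum_congr rfl fun s _ => Finset.sum_congr rfl fun t _ => by ring
  simp only [key, ← Finset.mul_sum]
  have swap : ∑ z : Fin n → Bool, ∑ s : Fin n → Bool, ∑ t : Fin n → Bool,
      (f s * g t) * (chi z s * chi z t)
      = ∑ s : Fin n → Bool, ∑ t : Fin n → Bool,
        (f s * g t) * ∑ z : Fin n → Bool, chi z s * chi z t := by
    rw [Finset.sum_comm]
    refine Finset.sum_congr rfl fun s _ => ?_
    rw [Finset.sum_comm]
    refine Finset.sum_congr rfl fun t _ => ?_
    rw [Finset.mul_sum]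
  rw [swap]
  have inner : ∀ s : Fin n → Bool, (∑ t : Fin n → Bool,
      (f s * g t) * ∑ z : Fin n → Bool, chi z s * chi z t) = (2 : ℝ) ^ n * (f s * g s) := by
    intro s
    simp only [sum_chi_mul_chi, mul_ite, mul_zero]
    rw [Finset.sum_ite_eq Finset.univ s fun t => f s * g t * 2 ^ n]
    simp [mul_comm]
  simp only [inner, ← Finset.mul_sum]
  have : ((1 : ℝ) / 2) ^ n * (2 : ℝ) ^ n = 1 := by
    rw [← mul_pow]; norm_num
  rw [← mul_assoc, mul_assoc ((1/2 : ℝ)^n), this, mul_one]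

lemma parseval_self {n : ℕ} (f : (Fin n → Bool) → ℝ) (hf : ∀ s, f s = 1 ∨ f s = -1) :
    ∑ z : Fin n → Bool, fhat f z ^ 2 = 1 := by
  have h1 : ∀ s, f s * f s = 1 := by
    intro s; rcases hf s with h | h <;> rw [h] <;> norm_num
  have := parseval f f
  simp only [h1, Finset.sum_const, Finset.card_univ, nsmul_eq_mul, mul_one] at this
  have hcard : (Fintype.card (Fin n → Bool) : ℝ) = 2 ^ n := by
    simp [Fintype.card_fun]
  rw [hcard] at this
  have h2 : ((1 : ℝ) / 2) ^ n * (2 : ℝ) ^ n = 1 := by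
    rw [← mul_pow]; norm_num
  simp only [sq]
  rw [this, h2]

/-- Quantitative core of Lemma 2: the CHSH value of any non-adaptive protocol
over `n` boxes is bounded by `max_{0 ≤ k ≤ n} |δ₁^k + δ₂^k + δ₃^k - ε^k|`. -/
theorem nonadaptive_value_bound
    (n : ℕ) (hn : 1 ≤ n) (δ₁ δ₂ δ₃ ε : ℝ)
    (hδ₁ : δ₁ ∈ Set.Icc (-1 : ℝ) 1) (hδ₂ : δ₂ ∈ Set.Icc (-1 : ℝ) 1)
    (hδ₃ : δ₃ ∈ Set.Icc (-1 : ℝ) 1) (hε : ε ∈ Set.Icc (-1 : ℝ) 1)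
    (f g : (Fin n → Bool) → ℝ)
    (hf : ∀ s, f s = 1 ∨ f s = -1) (hg : ∀ t, g t = 1 ∨ g t = -1) :
    |∑ z : Fin n → Bool, fhat f z * fhat g z *
        (δ₁ ^ hammWt z + δ₂ ^ hammWt z + δ₃ ^ hammWt z - ε ^ hammWt z)|
      ≤ (Finset.range (n + 1)).sup' Finset.nonempty_range_add_one
          (fun k => |δ₁ ^ k + δ₂ ^ k + δ₃ ^ k - ε ^ k|) := by
  set M := (Finset.range (n + 1)).sup' Finset.nonempty_range_add_one
      (fun k => |δ₁ ^ k + δ₂ ^ k + δ₃ ^ k - ε ^ k|) with hM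
  have hM0 : 0 ≤ M := le_trans (abs_nonneg _)
    (Finset.le_sup' (fun k => |δ₁ ^ k + δ₂ ^ k + δ₃ ^ k - ε ^ k|) (Finset.mem_range.mpr n.succ_pos))
  have hcz : ∀ z : Fin n → Bool,
      |δ₁ ^ hammWt z + δ₂ ^ hammWt z + δ₃ ^ hammWt z - ε ^ hammWt z| ≤ M := by
    intro z
    apply Finset.le_sup' (fun k => |δ₁ ^ k + δ₂ ^ k + δ₃ ^ k - ε ^ k|)
    rw [Finset.mem_range, Nat.lt_succ_iff]
    exact le_trans (Finset.card_filter_le _ _) (by simp)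
  -- Cauchy-Schwarz + Parseval
  have hCS : ∑ z : Fin n → Bool, |fhat f z| * |fhat g z| ≤ 1 := by
    have h := Finset.sum_mul_sq_le_sq_mul_sq Finset.univ
      (fun z => |fhat f z|) (fun z => |fhat g z|)
    simp only [sq_abs] at h
    rw [parseval_self f hf, parseval_self g hg, mul_one] at h
    have hnn : 0 ≤ ∑ z : Fin n → Bool, |fhat f z| * |fhat g z| :=
      Finset.sum_nonneg fun z _ => mul_nonneg (abs_nonneg _) (abs_nonneg _)
    nlinarith
  calc |∑ z : Fin n → Bool, fhat f z * fhat g z *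
        (δ₁ ^ hammWt z + δ₂ ^ hammWt z + δ₃ ^ hammWt z - ε ^ hammWt z)|
      ≤ ∑ z : Fin n → Bool, |fhat f z * fhat g z *
        (δ₁ ^ hammWt z + δ₂ ^ hammWt z + δ₃ ^ hammWt z - ε ^ hammWt z)| :=
        Finset.abs_sum_le_sum_abs _ _
    _ ≤ ∑ z : Fin n → Bool, |fhat f z| * |fhat g z| * M := by
        refine Finset.sum_le_sum fun z _ => ?_
        rw [abs_mul, abs_mul]
        exact mul_le_mul_of_nonneg_left (hcz z)
          (mul_nonneg (abs_nonneg _) (abs_nonneg _))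
    _ = (∑ z : Fin n → Bool, |fhat f z| * |fhat g z|) * M := by
        rw [Finset.sum_mul]
    _ ≤ 1 * M := mul_le_mul_of_nonneg_right hCS hM0
    _ = M := one_mul M
end

section
/- Let δ be a real number with 1/2 ≤ δ ≤ 1. Then there exists a real number ε with −1 ≤ ε ≤ 1 satisfying (1/4)(11δ² + 2δ − 2εδ − 2ε − ε²) > 3δ − ε if and only if δ > (3 + √6)/6. -/
/-- Allcock et al.'s depth-2 protocol distills some symmetric nonlocal box
with parameter `δ` if and only if `δ > (3 + √6)/6`. -/
theorem allcock_distills_iff (δ : ℝ) (h1 : 1 / 2 ≤ δ) (h2 : δ ≤ 1) :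
    (∃ ε : ℝ, -1 ≤ ε ∧ ε ≤ 1 ∧
        (1 / 4 : ℝ) * (11 * δ ^ 2 + 2 * δ - 2 * ε * δ - 2 * ε - ε ^ 2)
          > 3 * δ - ε)
      ↔ δ > (3 + Real.sqrt 6) / 6 := by
  have hs : Real.sqrt 6 ^ 2 = 6 := Real.sq_sqrt (by norm_num)
  have hs0 : (0:ℝ) ≤ Real.sqrt 6 := Real.sqrt_nonneg 6
  have hs3 : Real.sqrt 6 ≤ 3 := by
    nlinarith [hs, hs0]
  constructor
  · rintro ⟨ε, he1, he2, hgt⟩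
    have key : 12 * δ ^ 2 - 12 * δ + 1 > 0 := by
      nlinarith [sq_nonneg (ε - (1 - δ))]
    by_contra hle
    push_neg at hle
    nlinarith [hs, hs0, hs3]
  · intro hd
    refine ⟨1 - δ, by linarith, by linarith, ?_⟩
    have key : 12 * δ ^ 2 - 12 * δ + 1 > 0 := by
      nlinarith [hs, hs0, hs3, sq_nonneg (6 * δ - 3 - Real.sqrt 6)]
    nlinarith [key]
end

section
/- Let δ be a real number with 1/2 ≤ δ ≤ 1. Then there exists a real number ε with −1 ≤ ε ≤ 1 satisfying 3δ² − ε² > 3δ − ε if and only if δ > (3 + √6)/6. -/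
/-- The parity protocol over 2 boxes distills some symmetric nonlocal box
with parameter `δ` if and only if `δ > (3 + √6)/6`. -/
theorem parity_distills_iff (δ : ℝ) (h1 : 1 / 2 ≤ δ) (h2 : δ ≤ 1) :
    (∃ ε : ℝ, -1 ≤ ε ∧ ε ≤ 1 ∧ 3 * δ ^ 2 - ε ^ 2 > 3 * δ - ε)
      ↔ δ > (3 + Real.sqrt 6) / 6 := by
  have hs : Real.sqrt 6 ^ 2 = 6 := Real.sq_sqrt (by norm_num)
  have hs0 : (0:ℝ) ≤ Real.sqrt 6 := Real.sqrt_nonneg _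
  constructor
  · rintro ⟨ε, he1, he2, h⟩
    have key : 3 * δ ^ 2 - 3 * δ + 1/4 > 0 := by nlinarith [sq_nonneg (ε - 1/2)]
    by_contra h'
    push_neg at h'
    nlinarith [sq_nonneg (δ - 1/2), mul_nonneg (sub_nonneg.2 h1) hs0]
  · intro h
    refine ⟨1/2, by norm_num, by norm_num, ?_⟩
    nlinarith [mul_pos (sub_pos.2 h) (show (0:ℝ) < δ - (3 - Real.sqrt 6)/6 by nlinarith)]
end
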